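/- Let A be a brace of cardinality p^n with p > n + 1 prime, and suppose y, y' ∈ A satisfy p²(y − y') = 0. Then for every x ∈ A, p((px) * y) = p((px) * y'). -/

import Mathlib

/-- A left brace: an abelian group `(A,+)` together with a group operation `circ`
(whose identity is `0`) satisfying `a ∘ (b + c) + a = a ∘ b + a ∘ c`. -/
structure LeftBrace (A : Type*) [AddCommGroup A] where
  circ : A → A → A
  inv : A → A
  circ_assoc : ∀ a b c, circ (circ a b) c = circ a (circ b c)
  circ_zero : ∀ a, circ a 0 = a
  zero_circ : ∀ a, circ 0 a = a
  inv_circ : ∀ a, circ (inv a) a = 0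
  compat : ∀ a b c, circ a (b + c) + a = circ a b + circ a c

namespace LeftBrace

variable {A : Type*} [AddCommGroup A]

/-- The star operation `a * b = a ∘ b - a - b`. -/
def star (B : LeftBrace A) (a b : A) : A := B.circ a b - a - b

/-- `circPow B a n` is the product `a ∘ a ∘ ⋯ ∘ a` of `n` copies of `a`. -/
def circPow (B : LeftBrace A) (a : A) : ℕ → A
  | 0 => 0
  | n + 1 => B.circ a (B.circPow a n)

end LeftBrace

/-!
The λ-action of `(A, ∘)` on `(A, +)` is an action of a `p`-group on a `p`-group, hence unipotent:
the series `0 = S₀ ⊆ S₁ ⊆ ⋯`, where `S_{k+1} / S_k` is the fixed-point subgroup of `A / S_k`,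
reaches `A` at step `n`, so `(λ_a - 1)^n = 0`. Since `n < p`, the binomial theorem gives
`λ_a^p = 1` on the `p`-torsion of `A`, and `y^{∘p} = p • (y + u)` with `u ∈ S_k` whenever
`y ∈ S_{k+1}`. Then `p • y = y^{∘p} ∘ (p • z)` for some `z ∈ S_k`, and induction on `k` shows that
every `λ_{p • y}` fixes the `p`-torsion. Finally `p • ((p • x) * b) = λ_{p • x} (p • b) - p • b`
and `p • (y - y')` is `p`-torsion.
-/

theorem AddSubgroup.prime_mul_card_dvd_card_of_lt {A : Type*} [AddGroup A] {p n : ℕ}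
    (hp : p.Prime) (hA : Nat.card A = p ^ n) {H K : AddSubgroup A} (hHK : H < K) :
    p * Nat.card H ∣ Nat.card K := by
  have hcard : Nat.card H * H.relIndex K = Nat.card K := by
    rw [← relIndex_bot_left, ← relIndex_bot_left, relIndex_mul_relIndex _ _ _ bot_le hHK.le]
  obtain ⟨j, -, hj⟩ := (Nat.dvd_prime_pow hp).1
    ((relIndex_dvd_card H K).trans (hA ▸ card_addSubgroup_dvd_card K))
  have hj0 : j ≠ 0 := by
    rintro rfl
    exact hHK.not_ge (relIndex_eq_one.1 hj)
  rw [← hcard, mul_comm p, hj]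
  exact mul_dvd_mul_left _ (dvd_pow_self p hj0)

theorem AddMonoid.End.finsetSum_apply {ι M : Type*} [AddCommMonoid M] (s : Finset ι)
    (f : ι → AddMonoid.End M) (m : M) : (∑ i ∈ s, f i) m = ∑ i ∈ s, f i m :=
  AddMonoidHom.finsetSum_apply f s m

theorem geom_sum_add_one_eq_sum_choose {R : Type*} [Semiring R] (x : R) (m : ℕ) :
    ∑ i ∈ Finset.range m, (x + 1) ^ i = ∑ i ∈ Finset.range m, (m.choose (i + 1) : R) * x ^ i := by
  simpa [Polynomial.aeval_comp] using
    congrArg (Polynomial.aeval x) (Polynomial.geom_sum_X_comp_X_add_one_eq_sum (R := ℕ) m)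

section FixedSeries

variable {G A : Type*} [Group G] [AddCommGroup A] (ρ : G →* AddMonoid.End A)

def fixedSeries : ℕ → AddSubgroup A
  | 0 => ⊥
  | k + 1 => ⨅ g, (fixedSeries k).comap (ρ g - 1)

variable {ρ}

theorem map_mul_apply (g h : G) (m : A) : ρ (g * h) m = ρ g (ρ h m) := by
  rw [map_mul]
  rfl

@[simp]
theorem fixedSeries_zero : fixedSeries ρ 0 = ⊥ := rfl

theorem mem_fixedSeries_succ {k : ℕ} {m : A} :
    m ∈ fixedSeries ρ (k + 1) ↔ ∀ g, ρ g m - m ∈ fixedSeries ρ k := by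
  simp only [fixedSeries, AddSubgroup.mem_iInf, AddSubgroup.mem_comap]
  rfl

theorem fixedSeries_mono : Monotone (fixedSeries ρ) := by
  refine monotone_nat_of_le_succ fun k => ?_
  induction k with
  | zero => exact bot_le
  | succ k ih => exact fun m hm => mem_fixedSeries_succ.2 fun g => ih (mem_fixedSeries_succ.1 hm g)

theorem map_mem_fixedSeries (g : G) {k : ℕ} {m : A} (hm : m ∈ fixedSeries ρ k) :
    ρ g m ∈ fixedSeries ρ k := by
  induction k generalizing g m with
  | zero => simp_all
  | succ k ih =>
    refine mem_fixedSeries_succ.2 fun h => ?_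
    have hconj : ρ h (ρ g m) - ρ g m = ρ g (ρ (g⁻¹ * h * g) m - m) := by
      rw [map_sub, ← map_mul_apply, ← map_mul_apply, show g * (g⁻¹ * h * g) = h * g by group]
    rw [hconj]
    exact ih g (mem_fixedSeries_succ.1 hm _)

theorem sub_one_pow_apply_mem_fixedSeries (g : G) (i : ℕ) {k : ℕ} {m : A}
    (hm : m ∈ fixedSeries ρ k) : ((ρ g - 1) ^ i) m ∈ fixedSeries ρ (k - i) := by
  induction i generalizing k m with
  | zero => simpa using hm
  | succ i ih =>
    cases k with
    | zero => simp_all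
    | succ k =>
      rw [pow_succ, Nat.add_sub_add_right]
      exact ih (mem_fixedSeries_succ.1 hm g)

theorem sub_one_pow_apply_eq_zero {n : ℕ} (htop : fixedSeries ρ n = ⊤) (g : G) {i : ℕ}
    (hi : n ≤ i) (m : A) : ((ρ g - 1) ^ i) m = 0 := by
  have hm := sub_one_pow_apply_mem_fixedSeries g i (htop ▸ AddSubgroup.mem_top m)
  rwa [Nat.sub_eq_zero_of_le hi, fixedSeries_zero, AddSubgroup.mem_bot] at hm

instance (k : ℕ) : MulAction G (A ⧸ fixedSeries ρ k) where
  smul g := QuotientAddGroup.map _ _ (ρ g) fun _ => map_mem_fixedSeries g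
  one_smul q := by
    induction q using QuotientAddGroup.induction_on
    change ((ρ 1 _ : A) : A ⧸ fixedSeries ρ k) = _
    rw [map_one]
    rfl
  mul_smul g h q := by
    induction q using QuotientAddGroup.induction_on
    exact congrArg _ (map_mul_apply g h _)

theorem fixedSeries_smul_mk (g : G) (k : ℕ) (m : A) :
    g • (m : A ⧸ fixedSeries ρ k) = ((ρ g m : A) : A ⧸ fixedSeries ρ k) := rfl

theorem fixedSeries_lt_succ [Finite A] {p n : ℕ} [Fact p.Prime] (hG : IsPGroup p G)
    (hA : Nat.card A = p ^ n) {k : ℕ} (hk : fixedSeries ρ k ≠ ⊤) :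
    fixedSeries ρ k < fixedSeries ρ (k + 1) := by
  have hp : p ∣ Nat.card (A ⧸ fixedSeries ρ k) := by
    obtain ⟨j, -, hj⟩ := (Nat.dvd_prime_pow Fact.out).1 (hA ▸ (fixedSeries ρ k).index_dvd_card)
    have hj0 : j ≠ 0 := by
      rintro rfl
      exact hk (AddSubgroup.index_eq_one.1 hj)
    change p ∣ (fixedSeries ρ k).index
    exact hj ▸ dvd_pow_self p hj0
  have hzero : (0 : A ⧸ fixedSeries ρ k) ∈ MulAction.fixedPoints G _ := fun g =>
    map_zero (QuotientAddGroup.map _ _ (ρ g) _)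
  obtain ⟨q, hq, hq0⟩ := hG.exists_fixed_point_of_prime_dvd_card_of_fixed_point _ hp hzero
  obtain ⟨m, rfl⟩ := QuotientAddGroup.mk_surjective q
  refine SetLike.lt_iff_le_and_exists.2 ⟨fixedSeries_mono k.le_succ, m, ?_, ?_⟩
  · refine mem_fixedSeries_succ.2 fun g => ?_
    rw [← QuotientAddGroup.eq_iff_sub_mem, ← fixedSeries_smul_mk, hq g]
  · rwa [ne_comm, ne_eq, QuotientAddGroup.eq_zero_iff] at hq0

theorem fixedSeries_eq_top [Finite A] {p n : ℕ} [Fact p.Prime] (hG : IsPGroup p G)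
    (hA : Nat.card A = p ^ n) : fixedSeries ρ n = ⊤ := by
  have hp : p.Prime := Fact.out
  have key : ∀ k, fixedSeries ρ k = ⊤ ∨ p ^ k ∣ Nat.card (fixedSeries ρ k) := by
    intro k
    induction k with
    | zero => simp
    | succ k ih =>
      by_cases hk : fixedSeries ρ k = ⊤
      · exact .inl (top_le_iff.1 (hk ▸ fixedSeries_mono k.le_succ))
      · refine .inr ((pow_succ' p k).symm ▸ ?_)
        exact (mul_dvd_mul_left p (ih.resolve_left hk)).trans
          (AddSubgroup.prime_mul_card_dvd_card_of_lt hp hA (fixedSeries_lt_succ hG hA hk))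
  refine (key n).elim id fun hdvd => AddSubgroup.eq_top_of_card_eq _ ?_
  rw [hA]
  exact Nat.dvd_antisymm (hA ▸ AddSubgroup.card_addSubgroup_dvd_card _) hdvd

theorem pow_prime_apply_of_nsmul_eq_zero {p n : ℕ} (hp : p.Prime) (hn : n ≤ p)
    (htop : fixedSeries ρ n = ⊤) (g : G) {v : A} (hv : p • v = 0) : (ρ g ^ p) v = v := by
  rw [← sub_add_cancel (ρ g) 1, (Commute.one_right _).add_pow]
  rw [AddMonoid.End.finsetSum_apply, Finset.sum_eq_single_of_mem 0 (Finset.mem_range.2 p.succ_pos)]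
  · simp only [pow_zero, one_pow, one_mul, Nat.choose_zero_right, Nat.cast_one]
    rfl
  intro b hb hb0
  rw [one_pow, mul_one]
  change ((ρ g - 1) ^ b) (p.choose b • v) = 0
  rcases (Finset.mem_range_succ_iff.1 hb).lt_or_eq with hbp | rfl
  · obtain ⟨c, hc⟩ := hp.dvd_choose_self hb0 hbp
    rw [hc, mul_comm, mul_smul, hv, smul_zero, map_zero]
  · exact sub_one_pow_apply_eq_zero htop g hn _

theorem exists_geom_sum_apply_eq_nsmul {p n : ℕ} (hp : p.Prime) (hn : n < p)
    (htop : fixedSeries ρ n = ⊤) (g : G) {k : ℕ} {y : A} (hy : y ∈ fixedSeries ρ (k + 1)) :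
    ∃ u ∈ fixedSeries ρ k, ∑ j ∈ Finset.range p, (ρ g ^ j) y = p • (y + u) := by
  set ν := ρ g - 1
  refine ⟨∑ i ∈ Finset.range (p - 1), (p.choose (i + 2) / p) • (ν ^ (i + 1)) y,
    AddSubgroup.sum_mem _ fun i _ => AddSubgroup.nsmul_mem _ ?_ _, ?_⟩
  · exact fixedSeries_mono (by omega) (sub_one_pow_apply_mem_fixedSeries g (i + 1) hy)
  have hexpand : ∑ j ∈ Finset.range p, (ρ g ^ j) y
      = ∑ i ∈ Finset.range p, p.choose (i + 1) • (ν ^ i) y := by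
    rw [← AddMonoid.End.finsetSum_apply, ← sub_add_cancel (ρ g) 1,
      geom_sum_add_one_eq_sum_choose, AddMonoid.End.finsetSum_apply]
    rfl
  have hterm : ∀ i ∈ Finset.range (p - 1),
      p.choose (i + 2) • (ν ^ (i + 1)) y = p • (p.choose (i + 2) / p) • (ν ^ (i + 1)) y := by
    intro i hi
    rw [Finset.mem_range] at hi
    rw [smul_smul]
    rcases (show i + 2 < p ∨ i + 2 = p by omega) with hlt | heq
    · rw [Nat.mul_div_cancel' (hp.dvd_choose_self (by omega) hlt)]
    · rw [sub_one_pow_apply_eq_zero htop g (by omega), smul_zero, smul_zero]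
  obtain ⟨q, rfl⟩ : ∃ q, p = q + 1 := ⟨p - 1, by omega⟩
  rw [Nat.add_sub_cancel] at hterm ⊢
  rw [hexpand, Finset.sum_range_succ', Finset.sum_congr rfl hterm, ← Finset.smul_sum,
    smul_add, add_comm, zero_add, Nat.choose_one_right]
  rfl

end FixedSeries

namespace LeftBrace

variable {A : Type*} [AddCommGroup A] (B : LeftBrace A)

abbrev CircGroup (_B : LeftBrace A) : Type _ := A

instance : Group B.CircGroup where
  mul := B.circ
  one := (0 : A)
  inv := B.inv
  mul_assoc := B.circ_assoc
  one_mul := B.zero_circ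
  mul_one := B.circ_zero
  inv_mul_cancel := B.inv_circ

theorem circ_add (a b c : A) : B.circ a (b + c) = B.circ a b + B.circ a c - a :=
  eq_sub_of_add_eq (B.compat a b c)

def lam : B.CircGroup →* AddMonoid.End A where
  toFun a :=
    { toFun := fun b => B.circ a b - a
      map_zero' := by rw [B.circ_zero, sub_self]
      map_add' := fun b c => by rw [B.circ_add]; abel }
  map_one' := by
    ext b
    change B.circ 0 b - 0 = b
    rw [B.zero_circ, sub_zero]
  map_mul' a b := by
    ext c
    change B.circ (B.circ a b) c - B.circ a b = B.circ a (B.circ b c - b) - a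
    have h := B.circ_add a (B.circ b c - b) b
    rw [sub_add_cancel] at h
    rw [B.circ_assoc, h]
    abel

theorem mul_eq_lam_add (a b : B.CircGroup) : a * b = B.lam a b + a := (sub_add_cancel _ _).symm

theorem star_eq (a b : A) : B.star a b = B.lam a b - b := rfl

theorem circPow_eq_pow (a : B.CircGroup) (k : ℕ) : B.circPow a k = a ^ k := by
  induction k with
  | zero => rfl
  | succ k ih =>
    rw [circPow, ih, pow_succ']
    rfl

theorem circPow_eq_geom_sum (y : B.CircGroup) (k : ℕ) :
    B.circPow y k = ∑ j ∈ Finset.range k, (B.lam y ^ j) y := by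
  induction k with
  | zero => rfl
  | succ k ih =>
    rw [Finset.sum_range_succ, ← ih, circPow_eq_pow, pow_succ, mul_eq_lam_add, map_pow,
      add_comm, circPow_eq_pow]

theorem lam_nsmul_apply_of_nsmul_eq_zero {p n : ℕ} (hp : p.Prime) (hn : n < p) (htop : fixedSeries B.lam n = ⊤)
    {k : ℕ} {y : B.CircGroup} (hy : y ∈ fixedSeries B.lam k) {v : A} (hv : p • v = 0) :
    B.lam (p • y) v = v := by
  induction k generalizing y with
  | zero =>
    rw [fixedSeries_zero, AddSubgroup.mem_bot] at hy
    rw [hy, smul_zero]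
    exact congrArg (· v) (map_one B.lam)
  | succ k ih =>
    obtain ⟨u, hu, hsum⟩ := exists_geom_sum_apply_eq_nsmul hp hn htop y hy
    set w := y ^ p
    have hw : (w : A) = p • (y + u) := by rw [← hsum, ← circPow_eq_geom_sum, circPow_eq_pow]
    set z : A := -B.lam w⁻¹ u
    have hz : z ∈ fixedSeries B.lam k := neg_mem (map_mem_fixedSeries _ hu)
    have hsplit : (p • y : B.CircGroup) = w * (p • z : A) := by
      have hlz : B.lam w (p • z) = -(p • u) := by
        rw [map_nsmul, map_neg, ← map_mul_apply, mul_inv_cancel, map_one, smul_neg]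
        rfl
      rw [mul_eq_lam_add, hlz, hw, smul_add]
      abel
    calc B.lam (p • y) v = B.lam w (B.lam (p • z) v) := by rw [hsplit, map_mul_apply]
      _ = (B.lam y ^ p) v := by rw [ih hz, map_pow]
      _ = v := pow_prime_apply_of_nsmul_eq_zero hp hn.le htop y hv

end LeftBrace

/-- Let A be a brace of cardinality p^n, p > n + 1 prime. If p²(y - y') = 0 then
p((px) * y) = p((px) * y') for every x. -/
theorem stmt8 {A : Type*} [AddCommGroup A] [Fintype A] (B : LeftBrace A) (p n : ℕ)
    (hp : p.Prime) (hpn : n + 1 < p) (hcard : Fintype.card A = p ^ n)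
    (y y' : A) (h : p ^ 2 • (y - y') = 0) (x : A) :
    p • B.star (p • x) y = p • B.star (p • x) y' := by
  have : Fact p.Prime := ⟨hp⟩
  have hA : Nat.card B.CircGroup = p ^ n := Nat.card_eq_fintype_card.trans hcard
  have htop : fixedSeries B.lam n = ⊤ := fixedSeries_eq_top (IsPGroup.of_card hA) hA
  have hfix : B.lam (p • x) (p • (y - y')) = p • (y - y') :=
    B.lam_nsmul_apply_of_nsmul_eq_zero hp (by omega) htop (htop ▸ AddSubgroup.mem_top x)
      (by rwa [smul_smul, ← sq])
  rw [smul_sub, map_sub] at hfix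
  rw [LeftBrace.star_eq, LeftBrace.star_eq, smul_sub, smul_sub, ← map_nsmul, ← map_nsmul]
  exact sub_eq_sub_iff_sub_eq_sub.2 hfix
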